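/- A hyperoval of PHG(2, ℤ/4ℤ) has no tangent lines: every line of PHG(2, ℤ/4ℤ) contains either 0 or exactly 2 points of any given hyperoval. -/
import Mathlib


/-- A point of a projective Hjelmslev geometry PHG(n-1, R): a free rank-1 submodule
of Rⁿ, i.e. the R-span of a vector having at least one unit coordinate. -/
def IsPoint {R : Type} [CommRing R] {n : ℕ} (P : Submodule R (Fin n → R)) : Prop :=
  ∃ v : Fin n → R, (∃ i, IsUnit (v i)) ∧ P = Submodule.span R {v}

/-- A free rank-k submodule of Rⁿ: a submodule linearly isomorphic to Rᵏ. -/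
def IsFreeRank {R : Type} [CommRing R] {n : ℕ} (k : ℕ) (L : Submodule R (Fin n → R)) : Prop :=
  Nonempty ((Fin k → R) ≃ₗ[R] L)

/-- A line of PHG(2, R): a free rank-2 submodule of R³. -/
abbrev IsLine {R : Type} [CommRing R] (L : Submodule R (Fin 3 → R)) : Prop := IsFreeRank 2 L

/-- A hyperoval of PHG(2, R), |R| = 4: a set of 7 points with at most 2 points on each line. -/
def IsHyperoval {R : Type} [CommRing R] (H : Set (Submodule R (Fin 3 → R))) : Prop :=
  (∀ P ∈ H, IsPoint P) ∧ H.ncard = 7 ∧ ∀ L, IsLine L → {P ∈ H | P ≤ L}.ncard ≤ 2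

abbrev R4 := ZMod 4

namespace HypAux

abbrev V3 := Fin 3 → R4

def Ud (x : R4) : Prop := x = 1 ∨ x = 3

instance : DecidablePred Ud := fun x => by unfold Ud; infer_instance

lemma isUnit_iff_Ud {x : R4} : IsUnit x ↔ Ud x := by
  constructor
  · rintro ⟨u, rfl⟩
    have h : (u : R4) * ((u⁻¹ : R4ˣ) : R4) = 1 := u.mul_inv
    revert h
    generalize ((u⁻¹ : R4ˣ) : R4) = y
    generalize ((u : R4ˣ) : R4) = x
    revert x y
    decide
  · rintro (rfl | rfl)
    · exact isUnit_one
    · exact ⟨⟨3, 3, by decide, by decide⟩, rfl⟩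

def jA : Fin 3 → Fin 3 := fun i => if i = 0 then 1 else 0
def jB : Fin 3 → Fin 3 := fun i => if i = 2 then 1 else 2

lemma fin3_cases : ∀ i k : Fin 3, k = i ∨ k = jA i ∨ k = jB i := by decide

def red (i : Fin 3) (v w : V3) : V3 := w - (w i * v i) • v

def canon (i : Fin 3) (v w : V3) : V3 :=
  if Ud (red i v w (jA i)) then red i v w (jA i) • red i v w
  else red i v w (jB i) • red i v w

def repS (i : Fin 3) : Finset V3 :=
  Finset.univ.filter fun x =>
    x i = 0 ∧ (x (jA i) = 1 ∨ (¬ Ud (x (jA i)) ∧ x (jB i) = 1))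

lemma repS_card : ∀ i : Fin 3, (repS i).card = 6 := by decide

lemma Ud_sq {x : R4} (h : Ud x) : x * x = 1 := by rcases h with rfl | rfl <;> decide
lemma Ud_mul : ∀ a b : R4, Ud (a * b) → Ud a ∧ Ud b := by decide
lemma not_Ud_two_mul : ∀ x : R4, ¬ Ud x → 2 * x = 0 := by decide
lemma not_Ud_cases : ∀ x : R4, ¬ Ud x → x = 0 ∨ x = 2 := by decide
lemma unit_comb : ∀ x y a b : R4, ¬ Ud x → ¬ Ud y → ¬ Ud (x * a + y * b) := by decide
lemma two_c : ∀ c x y : R4, Ud x → 2 * c * x = 0 → 2 * c * y ≠ 2 := by decide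

open Submodule

lemma span_pair_le {M : Submodule R4 V3} {a b : V3} (ha : a ∈ M) (hb : b ∈ M) :
    span R4 {a, b} ≤ M := by
  rw [span_le, Set.insert_subset_iff, Set.singleton_subset_iff]; exact ⟨ha, hb⟩

lemma mem_pair_left (a b : V3) : a ∈ span R4 {a, b} := subset_span (Set.mem_insert _ _)
lemma mem_pair_right (a b : V3) : b ∈ span R4 {a, b} :=
  subset_span (Set.mem_insert_of_mem _ rfl)

lemma red_apply_self {i : Fin 3} {v : V3} (w : V3) (hv : Ud (v i)) : red i v w i = 0 := by
  show w i - (w i * v i) * v i = 0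
  rw [mul_assoc, Ud_sq hv, mul_one, sub_self]

lemma canon_spec {i : Fin 3} {v w : V3} (hv : Ud (v i))
    (hw : ∃ k, Ud (red i v w k)) :
    canon i v w ∈ repS i ∧ ∃ s : R4, Ud s ∧ red i v w = s • canon i v w := by
  have h0 : red i v w i = 0 := red_apply_self w hv
  by_cases hp : Ud (red i v w (jA i))
  · rw [canon, if_pos hp]
    refine ⟨?_, red i v w (jA i), hp, by rw [smul_smul, Ud_sq hp, one_smul]⟩
    simp only [repS, Finset.mem_filter, Finset.mem_univ, true_and, Pi.smul_apply,
      smul_eq_mul]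
    exact ⟨by rw [h0, mul_zero], Or.inl (Ud_sq hp)⟩
  · have hq : Ud (red i v w (jB i)) := by
      obtain ⟨k, hk⟩ := hw
      rcases fin3_cases i k with rfl | rfl | rfl
      · rw [h0] at hk; exact absurd hk (by decide)
      · exact absurd hk hp
      · exact hk
    rw [canon, if_neg hp]
    refine ⟨?_, red i v w (jB i), hq, by rw [smul_smul, Ud_sq hq, one_smul]⟩
    simp only [repS, Finset.mem_filter, Finset.mem_univ, true_and, Pi.smul_apply,
      smul_eq_mul]
    refine ⟨by rw [h0, mul_zero], Or.inr ⟨?_, Ud_sq hq⟩⟩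
    intro hcon
    exact hp (Ud_mul _ _ hcon).2

lemma span_pair_red (i : Fin 3) (v w : V3) :
    span R4 {v, w} = span R4 {v, red i v w} := by
  apply le_antisymm
  · apply span_pair_le (mem_pair_left _ _)
    rw [mem_span_pair]
    exact ⟨w i * v i, 1, by show _ • v + _ • (w - (w i * v i) • v) = w; module⟩
  · apply span_pair_le (mem_pair_left _ _)
    rw [mem_span_pair]
    exact ⟨-(w i * v i), 1, by show _ • v + _ • w = w - (w i * v i) • v; module⟩

lemma span_pair_unit_smul {v w : V3} {s : R4} (hs : Ud s) :
    span R4 {v, s • w} = span R4 {v, w} := by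
  apply le_antisymm
  · apply span_pair_le (mem_pair_left _ _)
    rw [mem_span_pair]; exact ⟨0, s, by rw [zero_smul, zero_add]⟩
  · apply span_pair_le (mem_pair_left _ _)
    rw [mem_span_pair]
    exact ⟨0, s, by rw [zero_smul, zero_add, smul_smul, Ud_sq hs, one_smul]⟩

lemma span_pair_canon {i : Fin 3} {v w : V3} (hv : Ud (v i))
    (hw : ∃ k, Ud (red i v w k)) :
    span R4 {v, w} = span R4 {v, canon i v w} := by
  obtain ⟨-, s, hs, hred⟩ := canon_spec hv hw
  rw [span_pair_red i v w, hred, span_pair_unit_smul hs]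

def pairMap (v u : V3) : (Fin 2 → R4) →ₗ[R4] V3 where
  toFun c := c 0 • v + c 1 • u
  map_add' a b := by simp only [Pi.add_apply]; module
  map_smul' r a := by simp only [Pi.smul_apply, RingHom.id_apply, smul_eq_mul]; module

lemma isLine_span_pair {i k : Fin 3} {v u : V3} (hv : Ud (v i)) (hu0 : u i = 0)
    (huk : Ud (u k)) : IsLine (span R4 {v, u}) := by
  have hmem : ∀ c, pairMap v u c ∈ span R4 {v, u} := fun c =>
    add_mem (smul_mem _ _ (mem_pair_left _ _)) (smul_mem _ _ (mem_pair_right _ _))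
  have hinj : Function.Injective (pairMap v u) := by
    rw [injective_iff_map_eq_zero]
    intro c hc
    have h1 : c 0 * v i = 0 := by
      have := congr_fun hc i
      simpa [pairMap, hu0] using this
    have hc0 : c 0 = 0 := by
      have h2 := congr_arg (· * v i) h1
      simpa [mul_assoc, Ud_sq hv] using h2
    have h3 : c 1 * u k = 0 := by
      have := congr_fun hc k
      simpa [pairMap, hc0] using this
    have hc1 : c 1 = 0 := by
      have h4 := congr_arg (· * u k) h3
      simpa [mul_assoc, Ud_sq huk] using h4
    funext t
    fin_cases t <;> simpa [hc0, hc1]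
  refine ⟨LinearEquiv.ofBijective ((pairMap v u).codRestrict _ hmem) ⟨?_, ?_⟩⟩
  · intro a b h
    exact hinj (congrArg Subtype.val h)
  · rintro ⟨y, hy⟩
    rw [mem_span_pair] at hy
    obtain ⟨s, t, hst⟩ := hy
    refine ⟨![s, t], Subtype.ext ?_⟩
    simpa [pairMap, LinearMap.codRestrict] using hst

lemma line_through (L : Submodule R4 V3) (hL : IsLine L) {i : Fin 3} {v : V3}
    (hv : Ud (v i)) (hvL : v ∈ L) :
    ∃ w, (∃ k, Ud (red i v w k)) ∧ L = span R4 {v, w} := by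
  obtain ⟨e⟩ := hL
  set a : V3 := (e (Pi.single 0 1) : V3) with ha
  set b : V3 := (e (Pi.single 1 1) : V3) with hb
  have hLab : L = span R4 {a, b} := by
    have h1 : (⊤ : Submodule R4 (Fin 2 → R4)) = span R4 {Pi.single 0 1, Pi.single 1 1} := by
      apply le_antisymm ?_ le_top
      intro c _
      rw [mem_span_pair]
      refine ⟨c 0, c 1, ?_⟩
      funext t
      fin_cases t <;> simp
    calc L = LinearMap.range (L.subtype ∘ₗ (e : (Fin 2 → R4) →ₗ[R4] L)) := by
            rw [LinearMap.range_comp, LinearEquiv.range, Submodule.map_top,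
              Submodule.range_subtype]
      _ = Submodule.map (L.subtype ∘ₗ (e : (Fin 2 → R4) →ₗ[R4] L)) ⊤ :=
            LinearMap.range_eq_map _
      _ = span R4 {a, b} := by
            rw [h1, Submodule.map_span, Set.image_pair]
            rfl
  have hindep : ∀ s t : R4, s • a + t • b = 0 → s = 0 ∧ t = 0 := by
    intro s t hst
    have hL0 : s • e (Pi.single 0 1) + t • e (Pi.single 1 1) = (0 : L) := by
      apply Subtype.ext
      push_cast
      exact hst
    have h5 := congr_arg e.symm hL0
    rw [map_add, map_smul, map_smul, e.symm_apply_apply, e.symm_apply_apply, map_zero] at h5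
    constructor
    · have := congr_fun h5 0; simpa using this
    · have := congr_fun h5 1; simpa using this
  have hvab : v ∈ span R4 {a, b} := hLab ▸ hvL
  rw [mem_span_pair] at hvab
  obtain ⟨x, y, hxy⟩ := hvab
  have main : ∀ (a' b' : V3) (x' y' : R4), Ud x' → x' • a' + y' • b' = v →
      (∀ s t : R4, s • a' + t • b' = 0 → s = 0 ∧ t = 0) →
      L = span R4 {a', b'} →
      ∃ w, (∃ k, Ud (red i v w k)) ∧ L = span R4 {v, w} := by
    intro a' b' x' y' hx' hxy' hind hLab'
    refine ⟨b', ?_, ?_⟩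
    · by_contra hcon
      push_neg at hcon
      set c := b' i * v i with hc
      have h2 : (2 : R4) • (b' - c • v) = 0 := by
        funext k
        have h6 := not_Ud_two_mul _ (hcon k)
        show (2 : R4) * (b' k - c * v k) = 0
        exact h6
      have h3 : (2 : R4) • b' = (2 * c) • v := by
        have h7 : (2 : R4) • b' - (2 * c) • v = 0 := by
          rw [← h2]; module
        rw [← sub_eq_zero]; exact h7
      have hrel : (2 * c * x') • a' + (2 * c * y' - 2) • b' = 0 := by
        have h8 : (2 * c * x') • a' + (2 * c * y' - 2) • b' = (2 * c) • v - (2 : R4) • b' := by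
          rw [← hxy']; module
        rw [h8, h3, sub_self]
      obtain ⟨h4, h5⟩ := hind _ _ hrel
      exact two_c c x' y' hx' h4 (by rw [sub_eq_zero] at h5; exact h5)
    · rw [hLab']
      apply le_antisymm
      · apply span_pair_le ?_ (mem_pair_right _ _)
        rw [mem_span_pair]
        refine ⟨x', -(x' * y'), ?_⟩
        rw [← hxy']
        have hx2 : x' * x' = 1 := Ud_sq hx'
        rw [smul_add, smul_smul, smul_smul, hx2, one_smul]
        module
      · apply span_pair_le ?_ (mem_pair_right _ _)
        rw [mem_span_pair]
        exact ⟨x', y', hxy'⟩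
  have hxyu : Ud x ∨ Ud y := by
    by_contra hcon2
    push_neg at hcon2
    have h9 : ¬ Ud (x * a i + y * b i) := unit_comb _ _ _ _ hcon2.1 hcon2.2
    apply h9
    have h10 := congr_fun hxy i
    simp only [Pi.add_apply, Pi.smul_apply, smul_eq_mul] at h10
    rw [h10]; exact hv
  rcases hxyu with hx | hy
  · exact main a b x y hx hxy hindep hLab
  · refine main b a y x hy (by rw [add_comm]; exact hxy) ?_ (by rw [Set.pair_comm]; exact hLab)
    intro s t hst
    have := hindep t s (by rw [add_comm]; exact hst)
    exact ⟨this.2, this.1⟩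

lemma join (i : Fin 3) (v w : V3) (hv : Ud (v i)) (hw : ∃ k, Ud (w k))
    (hne : span R4 {w} ≠ span R4 {v}) :
    ∃ u : V3, u i = 0 ∧ (∃ k, Ud (u k)) ∧ w ∈ span R4 {v, u} := by
  by_cases hcase : ∃ k, Ud (red i v w k)
  · refine ⟨red i v w, red_apply_self w hv, hcase, ?_⟩
    rw [mem_span_pair]
    exact ⟨w i * v i, 1, by show _ • v + _ • (w - (w i * v i) • v) = w; module⟩
  · push_neg at hcase
    set u'' : V3 := fun k => if red i v w k = 0 then 0 else 1 with hu''
    have h2 : (2 : R4) • u'' = red i v w := by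
      funext k
      show (2 : R4) * (if red i v w k = 0 then 0 else 1) = red i v w k
      rcases not_Ud_cases _ (hcase k) with h | h
      · rw [h]; decide
      · rw [h]; decide
    set d := u'' i * v i with hd
    set u : V3 := u'' - d • v with hu
    have hu0 : u i = 0 := by
      show u'' i - (u'' i * v i) * v i = 0
      rw [mul_assoc, Ud_sq hv, mul_one, sub_self]
    have hwmem : (w i * v i + 2 * d) • v + (2 : R4) • u = w := by
      have h9 : (w i * v i + 2 * d) • v + (2 : R4) • u
          = (w i * v i) • v + (2 : R4) • u'' := by rw [hu]; module
      rw [h9, h2]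
      show (w i * v i) • v + (w - (w i * v i) • v) = w
      module
    refine ⟨u, hu0, ?_, ?_⟩
    · by_contra hcon
      push_neg at hcon
      have h2u : (2 : R4) • u = 0 := by
        funext k
        exact not_Ud_two_mul _ (hcon k)
      set ee := w i * v i + 2 * d with hee
      have hwv : w = ee • v := by
        rw [← hwmem, h2u, add_zero]
      obtain ⟨k, hk⟩ := hw
      have hke := congr_fun hwv k
      simp only [Pi.smul_apply, smul_eq_mul] at hke
      rw [hke] at hk
      have he : Ud ee := (Ud_mul _ _ hk).1
      apply hne
      apply le_antisymm
      · rw [span_le, Set.singleton_subset_iff]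
        show w ∈ span R4 {v}
        rw [mem_span_singleton]
        exact ⟨ee, hwv.symm⟩
      · rw [span_le, Set.singleton_subset_iff]
        show v ∈ span R4 {w}
        rw [mem_span_singleton]
        refine ⟨ee, ?_⟩
        rw [hwv, smul_smul, Ud_sq he, one_smul]
    · rw [mem_span_pair]
      exact ⟨w i * v i + 2 * d, 2, hwmem⟩

end HypAux

open HypAux Submodule in
/-- A hyperoval of PHG(2, ℤ/4ℤ) has no tangents: every line contains either 0 or
exactly 2 of its points. -/
theorem hyperoval_no_tangents :
    ∀ H : Set (Submodule R4 (Fin 3 → R4)), IsHyperoval H →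
      ∀ L : Submodule R4 (Fin 3 → R4), IsLine L →
        {P ∈ H | P ≤ L}.ncard = 0 ∨ {P ∈ H | P ≤ L}.ncard = 2 := by
  intro H hH L hL
  obtain ⟨hpt, hcard, hmax⟩ := hH
  have h2 := hmax L hL
  by_contra hcon
  push_neg at hcon
  obtain ⟨h0, h2'⟩ := hcon
  have h1 : {P ∈ H | P ≤ L}.ncard = 1 := by omega
  obtain ⟨P, hP⟩ := Set.ncard_eq_one.mp h1
  have hPmem : P ∈ {P ∈ H | P ≤ L} := by rw [hP]; rfl
  have hPH : P ∈ H := hPmem.1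
  have hPL : P ≤ L := hPmem.2
  have hHfin : H.Finite := by
    by_contra hinf
    rw [Set.Infinite.ncard hinf] at hcard
    omega
  obtain ⟨v, ⟨i, hvi'⟩, hPv⟩ := hpt P hPH
  have hvi : Ud (v i) := isUnit_iff_Ud.mp hvi'
  have hvL : v ∈ L := hPL (hPv ▸ Submodule.mem_span_singleton_self v)
  obtain ⟨w₀, hw₀u, hLw₀⟩ := line_through L hL hvi hvL
  -- choose vectors for the other points and joins
  have hwQ : ∀ Q : Submodule R4 V3, ∃ wq : V3, Q ∈ H ∧ Q ≠ P →
      (∃ k, Ud (wq k)) ∧ Q = span R4 {wq} ∧ span R4 {wq} ≠ span R4 {v} := by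
    intro Q
    by_cases h : Q ∈ H ∧ Q ≠ P
    · obtain ⟨wq, ⟨k, hk⟩, hQ⟩ := hpt Q h.1
      refine ⟨wq, fun _ => ⟨⟨k, isUnit_iff_Ud.mp hk⟩, hQ, fun hcon2 => h.2 ?_⟩⟩
      rw [hQ, hcon2, ← hPv]
    · exact ⟨0, fun hc => absurd hc h⟩
  choose wq hwq using hwQ
  have hjoin : ∀ Q : Submodule R4 V3, ∃ u : V3, Q ∈ H ∧ Q ≠ P →
      u i = 0 ∧ (∃ k, Ud (u k)) ∧ wq Q ∈ span R4 {v, u} := by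
    intro Q
    by_cases h : Q ∈ H ∧ Q ≠ P
    · obtain ⟨h1', h2'', h3'⟩ := hwq Q h
      obtain ⟨u, hu⟩ := join i v (wq Q) hvi h1' h3'
      exact ⟨u, fun _ => hu⟩
    · exact ⟨0, fun hc => absurd hc h⟩
  choose uu huu using hjoin
  classical
  set uv : Submodule R4 V3 → V3 := fun Q => if Q = P then w₀ else uu Q with huv
  have hredu : ∀ Q ∈ H, ∃ k, Ud (red i v (uv Q) k) := by
    intro Q hQ
    by_cases h : Q = P
    · simp only [huv, if_pos h]; exact hw₀u
    · simp only [huv, if_neg h]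
      obtain ⟨hu0, ⟨k, hk⟩, -⟩ := huu Q ⟨hQ, h⟩
      refine ⟨k, ?_⟩
      show Ud (uu Q k - (uu Q i * v i) * v k)
      rw [hu0, zero_mul, zero_mul, sub_zero]
      exact hk
  set Mline : Submodule R4 V3 → Submodule R4 V3 := fun Q => span R4 {v, uv Q} with hMl
  have hMP : Mline P = L := by
    simp only [hMl, huv, if_pos rfl]
    exact hLw₀.symm
  have hMQ : ∀ Q, Q ∈ H → Q ≠ P → IsLine (Mline Q) ∧ P ≤ Mline Q ∧ Q ≤ Mline Q := by
    intro Q hQ hne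
    obtain ⟨hu0, ⟨k, hk⟩, hmem⟩ := huu Q ⟨hQ, hne⟩
    have huvQ : uv Q = uu Q := if_neg hne
    refine ⟨?_, ?_, ?_⟩
    · show IsLine (span R4 {v, uv Q})
      rw [huvQ]
      exact isLine_span_pair hvi hu0 hk
    · rw [hPv]
      rw [span_le, Set.singleton_subset_iff]
      exact mem_pair_left _ _
    · calc Q = span R4 {wq Q} := (hwq Q ⟨hQ, hne⟩).2.1
        _ ≤ Mline Q := by
            rw [span_le, Set.singleton_subset_iff]
            show wq Q ∈ span R4 {v, uv Q}
            rw [huvQ]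
            exact hmem
  have hcard' : hHfin.toFinset.card = 7 := by
    rw [← Set.ncard_eq_toFinset_card H hHfin]
    exact hcard
  have hmaps : ∀ Q ∈ hHfin.toFinset, canon i v (uv Q) ∈ repS i := by
    intro Q hQ
    rw [Set.Finite.mem_toFinset] at hQ
    exact (canon_spec hvi (hredu Q hQ)).1
  obtain ⟨Q, hQ, Q', hQ', hQne, hQeq⟩ :=
    Finset.exists_ne_map_eq_of_card_lt_of_maps_to
      (by rw [hcard', repS_card]; norm_num) hmaps
  rw [Set.Finite.mem_toFinset] at hQ hQ'
  have hMeq : Mline Q = Mline Q' := by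
    show span R4 {v, uv Q} = span R4 {v, uv Q'}
    rw [span_pair_canon hvi (hredu Q hQ), hQeq, ← span_pair_canon hvi (hredu Q' hQ')]
  by_cases hQP : Q = P
  · have hQ'P : Q' ≠ P := fun h => hQne (by rw [hQP, h])
    obtain ⟨-, -, hQ'M⟩ := hMQ Q' hQ' hQ'P
    have : Q' ∈ {X ∈ H | X ≤ L} := ⟨hQ', by rw [← hMP, ← hQP, hMeq]; exact hQ'M⟩
    rw [hP] at this
    exact hQ'P this
  · by_cases hQ'P : Q' = P
    · obtain ⟨-, -, hQM⟩ := hMQ Q hQ hQP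
      have : Q ∈ {X ∈ H | X ≤ L} := ⟨hQ, by rw [← hMP, ← hQ'P, ← hMeq]; exact hQM⟩
      rw [hP] at this
      exact hQP this
    · obtain ⟨hlineM, hPM, hQM⟩ := hMQ Q hQ hQP
      obtain ⟨-, -, hQ'M⟩ := hMQ Q' hQ' hQ'P
      have h3 : ({P, Q, Q'} : Set (Submodule R4 (Fin 3 → R4))) ⊆ {X ∈ H | X ≤ Mline Q} := by
        rintro X (rfl | rfl | rfl)
        exacts [⟨hPH, hPM⟩, ⟨hQ, hQM⟩, ⟨hQ', hMeq ▸ hQ'M⟩]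
      have hfin : {X ∈ H | X ≤ Mline Q}.Finite := hHfin.subset fun X hX => hX.1
      have hle := Set.ncard_le_ncard h3 hfin
      have h33 : ({P, Q, Q'} : Set (Submodule R4 (Fin 3 → R4))).ncard = 3 := by
        rw [Set.ncard_insert_of_notMem (by simp [Ne.symm hQP, Ne.symm hQ'P]),
          Set.ncard_pair hQne]
      have hb := hmax (Mline Q) hlineM
      omega
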